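/- arXiv:0809.2236 — 4 statements merged into one kernel-verified Lean document; each statement's English description precedes it below -/
import Mathlib

section
/- Let π be a permutation of {0,1,...,n-1} with π(0) = 0. Then π⁻¹ (equivalently, π) can be written as a composition of at most |π| + ς(π) transpositions each of the form (0,i), where |π| is the size of the support of π and ς(π) is the number of (nontrivial) disjoint cycles of π. -/
/-!
The nontrivial cycles of `π` avoid `0` and are disjoint, so it suffices to write one cycle
`c = (a₁ … aₛ)` avoiding `0` with `s + 1` flips. A cycle through the centre is a product of flips,
`(0 a₁ … aₛ) = (0 aₛ) ⋯ (0 a₁)`, and `c = (0 a₁) (0 a₁ … aₛ)`. Applying this to `π⁻¹`, which has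
the same support and cycle type as `π`, gives the bound.
-/

open Equiv Equiv.Perm Finset

variable {α : Type*} [DecidableEq α]

def IsStarProduct (z : α) (k : ℕ) (σ : Perm α) : Prop :=
  ∃ L : List (Perm α), (∀ τ ∈ L, ∃ i, i ≠ z ∧ τ = swap z i) ∧ L.prod = σ ∧ L.length ≤ k

theorem isStarProduct_one (z : α) : IsStarProduct z 0 (1 : Perm α) :=
  ⟨[], by simp, rfl, le_rfl⟩

theorem isStarProduct_swap (z i : α) : IsStarProduct z 1 (swap z i) := by
  by_cases hi : i = z
  · subst hi
    exact ⟨[], by simp, by rw [swap_self, List.prod_nil, Perm.one_def], zero_le_one⟩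
  · exact ⟨[swap z i], by simpa using ⟨i, hi, rfl⟩, List.prod_singleton, le_rfl⟩

namespace IsStarProduct

variable {z : α} {j k : ℕ} {σ τ : Perm α}

theorem mul (hσ : IsStarProduct z j σ) (hτ : IsStarProduct z k τ) :
    IsStarProduct z (j + k) (σ * τ) := by
  obtain ⟨L, hL, rfl, hLj⟩ := hσ
  obtain ⟨M, hM, rfl, hMk⟩ := hτ
  refine ⟨L ++ M, fun ρ hρ => ?_, List.prod_append, by simp; omega⟩
  rcases List.mem_append.1 hρ with h | h
  exacts [hL ρ h, hM ρ h]

end IsStarProduct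

theorem isStarProduct_formPerm_cons (z : α) (l : List α) (hl : (z :: l).Nodup) :
    IsStarProduct z l.length (z :: l).formPerm := by
  induction l using List.reverseRecOn with
  | nil => simpa using isStarProduct_one z
  | append_singleton l a ih =>
    have hrot : (a :: z :: l).rotate 1 = z :: (l ++ [a]) := by simp
    have hnd : (a :: z :: l).Nodup := by rw [← List.nodup_rotate, hrot]; exact hl
    rw [← hrot, List.formPerm_rotate_one _ hnd, List.formPerm_cons_cons, swap_comm,
      List.length_append, List.length_singleton, add_comm]
    exact (isStarProduct_swap z a).mul (ih (by simp_all))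

theorem Equiv.Perm.IsCycle.isStarProduct [Fintype α] {c : Perm α} (hc : c.IsCycle) {z : α}
    (hz : c z = z) :
    IsStarProduct z (#c.support + 1) c := by
  obtain ⟨a, ha, -⟩ := id hc
  have hzl : z ∉ c.toList a := fun h =>
    mem_support.1 ((mem_toList_iff.1 h).1.mem_support_iff.1 (mem_support.2 ha)) hz
  obtain ⟨b, t, hl⟩ :=
    List.exists_cons_of_ne_nil (toList_eq_nil_iff.not_left.2 (mem_support.2 ha))
  have hform : (z :: b :: t).formPerm = swap z b * c := by
    rw [List.formPerm_cons_cons, ← hl, formPerm_toList, hc.cycleOf_eq ha]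
  have hnd : (z :: b :: t).Nodup := hl ▸ List.nodup_cons.2 ⟨hzl, nodup_toList c a⟩
  have hlen : (b :: t).length = #c.support := by rw [← hl, Perm.length_toList, hc.cycleOf_eq ha]
  have := (isStarProduct_swap z b).mul (isStarProduct_formPerm_cons z _ hnd)
  rwa [hform, ← mul_assoc, swap_mul_self, one_mul, hlen, add_comm] at this

theorem isStarProduct_of_apply_eq_self [Fintype α] (z : α) (σ : Perm α) (hz : σ z = z) :
    IsStarProduct z (#σ.support + Multiset.card σ.cycleType) σ := by
  induction σ using cycle_induction_on with
  | base_one => simpa using isStarProduct_one z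
  | base_cycles c hc => simpa [hc.cycleType] using hc.isStarProduct hz
  | induction_disjoint σ τ hd _ ihσ ihτ =>
    obtain ⟨hσz, hτz⟩ := hd.mul_apply_eq_iff.1 hz
    rw [hd.card_support_mul, hd.cycleType_mul, Multiset.card_add, add_add_add_comm]
    exact (ihσ hσz).mul (ihτ hτz)

/-- A permutation `π` of `{0,1,...,n-1}` fixing `0` can be written (via `π⁻¹`) as a
composition of at most `|π| + ς(π)` transpositions of the form `(0,i)`, where `|π|` is
the size of the support and `ς(π)` the number of nontrivial disjoint cycles. -/
theorem stmt_9 (n : ℕ) (hn : 0 < n) (π : Equiv.Perm (Fin n)) (hπ : π ⟨0, hn⟩ = ⟨0, hn⟩) :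
    ∃ L : List (Equiv.Perm (Fin n)),
      (∀ τ ∈ L, ∃ i : Fin n, i ≠ ⟨0, hn⟩ ∧ τ = Equiv.swap ⟨0, hn⟩ i) ∧
      L.prod = π⁻¹ ∧
      L.length ≤ π.support.card + Multiset.card π.cycleType := by
  have h := isStarProduct_of_apply_eq_self _ π⁻¹ (inv_eq_iff_eq.2 hπ.symm)
  rwa [support_inv, cycleType_inv] at h
end

section
/- Let σ be a cycle and let i₁, i₂ be two distinct elements of its support. Then exactly one of the following holds: (1) σ(i₁,i₂) is a product of two disjoint nontrivial cycles whose supports partition the support of σ; (2) σ(i₁,i₂) is a cycle whose support is the support of σ minus one of i₁, i₂; (3) σ = (i₁,i₂) and σ(i₁,i₂) is the identity. -/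
/-!
Write `i₂ = σ^k i₁` and `n = #σ.support`. Composing with `(i₁ i₂)` on the right sends `i₂ ↦ σ i₁`
and `i₁ ↦ σ i₂` and leaves `σ` unchanged elsewhere, so it cuts the orbit of `σ` into the arcs
`σ i₁, …, σ^k i₁ = i₂` and `σ i₂, …, σ^(n-k) i₂ = i₁`, each of which closes up into a cycle of
`σ (i₁ i₂)`. An arc of length one is a fixed point: if exactly one arc is that short we are in
case (2), and if both are then `σ = (i₁ i₂)`.
-/

namespace Equiv.Perm

variable {α : Type*}

theorem pow_apply_eq_pow_apply_of_forall_lt {f g : Perm α} {x : α} {n : ℕ}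
    (h : ∀ i < n, f ((g ^ i) x) = g ((g ^ i) x)) : (f ^ n) x = (g ^ n) x := by
  induction n with
  | zero => rfl
  | succ n ih =>
    rw [pow_succ', mul_apply, ih fun i hi => h i (by omega), h n (by omega), ← mul_apply,
      ← pow_succ']

theorem pow_apply_eq_pow_mod_apply {f : Perm α} {x : α} {n : ℕ} (h : (f ^ n) x = x) (m : ℕ) :
    (f ^ m) x = (f ^ (m % n)) x := by
  conv_lhs => rw [← Nat.mod_add_div m n, pow_add, pow_mul, mul_apply,
    (Function.IsFixedPt.perm_pow h (m / n)).eq]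

theorem IsCycleOn.pow_apply_ne_pow_apply {f : Perm α} {s : Finset α} {a : α} (hf : f.IsCycleOn s)
    (ha : a ∈ s) {m n : ℕ} (hm : m < s.card) (hn : n < s.card) (hmn : m ≠ n) :
    (f ^ m) a ≠ (f ^ n) a := by
  rw [Ne, hf.pow_apply_eq_pow_apply ha]
  exact fun h => hmn (h.eq_of_lt_of_lt hm hn)

section MulSwap

variable [DecidableEq α] {f : Perm α} {s : Finset α} {a b : α} {k : ℕ}

theorem IsCycleOn.mul_swap_pow_apply (hf : f.IsCycleOn s) (ha : a ∈ s) (hk : k < s.card)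
    (hb : (f ^ k) a = b) {j : ℕ} (hj₀ : 0 < j) (hjk : j ≤ k) :
    ((f * swap a b) ^ j) b = (f ^ j) a := by
  obtain ⟨i, rfl⟩ : ∃ i, j = i + 1 := ⟨j - 1, by omega⟩
  rw [pow_succ, mul_apply, mul_apply, swap_apply_right, pow_succ, mul_apply]
  refine pow_apply_eq_pow_apply_of_forall_lt fun l hl => ?_
  have hfl : (f ^ l) (f a) = (f ^ (l + 1)) a := by rw [pow_succ, mul_apply]
  rw [mul_apply, swap_apply_of_ne_of_ne]
  · rw [hfl]
    simpa using hf.pow_apply_ne_pow_apply ha (n := 0) (by omega) (by omega) (by omega)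
  · rw [hfl, ← hb]
    exact hf.pow_apply_ne_pow_apply ha (by omega) hk (by omega)

theorem IsCycleOn.not_sameCycle_mul_swap [Finite α] (hf : f.IsCycleOn s) (ha : a ∈ s)
    (hk₀ : 0 < k) (hk : k < s.card) (hb : (f ^ k) a = b) : ¬(f * swap a b).SameCycle a b := by
  have hab : a ≠ b := by
    rw [← hb]
    simpa using (hf.pow_apply_ne_pow_apply ha hk (by omega) hk₀.ne').symm
  have hperiod : ((f * swap a b) ^ k) b = b := (hf.mul_swap_pow_apply ha hk hb hk₀ le_rfl).trans hb
  rintro hsame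
  obtain ⟨m, hm⟩ := hsame.symm.exists_nat_pow_eq
  rw [pow_apply_eq_pow_mod_apply hperiod] at hm
  rcases Nat.eq_zero_or_pos (m % k) with hr | hr
  · rw [hr, pow_zero, one_apply] at hm
    exact hab hm.symm
  · rw [hf.mul_swap_pow_apply ha hk hb hr (Nat.mod_lt m hk₀).le] at hm
    simpa [hm] using hf.pow_apply_ne_pow_apply ha (n := 0) ((Nat.mod_lt m hk₀).trans hk)
      (by omega) hr.ne'

theorem IsCycleOn.sameCycle_mul_swap_or {x : α} (hf : f.IsCycleOn s) (ha : a ∈ s)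
    (hk₀ : 0 < k) (hk : k < s.card) (hb : (f ^ k) a = b) (hx : x ∈ s) :
    (f * swap a b).SameCycle a x ∨ (f * swap a b).SameCycle b x := by
  obtain ⟨j, hj, rfl⟩ := hf.exists_pow_eq ha hx
  rcases Nat.eq_zero_or_pos j with rfl | hj₀
  · exact Or.inl (by simpa using SameCycle.refl _ _)
  rcases le_or_gt j k with hjk | hkj
  · exact Or.inr ⟨j, by rw [zpow_natCast, hf.mul_swap_pow_apply ha hk hb hj₀ hjk]⟩
  · have hbs : b ∈ s := hb ▸ hf.1.mapsTo.perm_pow k ha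
    have hba : (f ^ (s.card - k)) b = a := by
      rw [← hb, ← mul_apply, ← pow_add, Nat.sub_add_cancel hk.le, hf.pow_card_apply ha]
    have harc := hf.mul_swap_pow_apply hbs (by omega) hba (j := j - k) (by omega) (by omega)
    rw [swap_comm] at harc
    refine Or.inl ⟨(j - k : ℕ), ?_⟩
    rw [zpow_natCast, harc, ← hb, ← mul_apply, ← pow_add, Nat.sub_add_cancel hkj.le]

theorem support_mul_swap_of_apply_ne [Fintype α] (ha : f a ≠ a) (hb : f b ≠ b) (hab : f a ≠ b)
    (hba : f b ≠ a) : (f * swap a b).support = f.support := by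
  ext x
  simp only [mem_support, mul_apply]
  rcases eq_or_ne x a with rfl | hxa
  · simp [ha, hba]
  rcases eq_or_ne x b with rfl | hxb
  · simp [hb, hab]
  rw [swap_apply_of_ne_of_ne hxa hxb]

theorem IsCycle.mul_swap_of_apply_eq [Fintype α] (hf : f.IsCycle) (hab : f a = b) (hb : f b ≠ b)
    (hba : f b ≠ a) : (f * swap a b).IsCycle ∧ (f * swap a b).support = f.support \ {b} := by
  have hffb : f (f b) ≠ b := fun h => hba (f.injective (h.trans hab.symm))
  rw [mul_swap_eq_swap_mul, hab]
  exact ⟨hf.swap_mul hb hffb, support_swap_mul_eq f b hffb⟩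

end MulSwap

section CycleOf

variable {f : Perm α} [DecidableRel f.SameCycle] {a b : α}

theorem disjoint_cycleOf_of_not_sameCycle (hab : ¬f.SameCycle a b) :
    (f.cycleOf a).Disjoint (f.cycleOf b) := fun x => by
  by_cases hax : f.SameCycle a x
  · exact Or.inr (cycleOf_apply_of_not_sameCycle fun hbx => hab (hax.trans hbx.symm))
  · exact Or.inl (cycleOf_apply_of_not_sameCycle hax)

theorem eq_cycleOf_mul_cycleOf (hab : ¬f.SameCycle a b)
    (hcover : ∀ x, f x ≠ x → f.SameCycle a x ∨ f.SameCycle b x) :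
    f = f.cycleOf a * f.cycleOf b := by
  ext x
  rw [mul_apply, cycleOf_apply f b x]
  by_cases hbx : f.SameCycle b x
  · rw [if_pos hbx, cycleOf_apply_of_not_sameCycle]
    exact fun hafx => hab (hafx.trans (sameCycle_apply_right.2 hbx).symm)
  rw [if_neg hbx, cycleOf_apply]
  split_ifs with hax
  · rfl
  by_contra hfx
  exact (hcover x hfx).elim hax hbx

end CycleOf

theorem IsCycle.exists_disjoint_cycles_mul_swap_eq [Fintype α] [DecidableEq α] {σ : Perm α}
    {a b : α} (hσ : σ.IsCycle) (ha : a ∈ σ.support) (hb : b ∈ σ.support) (hne : a ≠ b)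
    (hab : σ a ≠ b) (hba : σ b ≠ a) :
    ∃ τ₁ τ₂ : Perm α, τ₁.IsCycle ∧ τ₂.IsCycle ∧ τ₁.Disjoint τ₂ ∧ σ * swap a b = τ₁ * τ₂ ∧
      τ₁.support ∪ τ₂.support = σ.support ∧ _root_.Disjoint τ₁.support τ₂.support := by
  set τ := σ * swap a b
  have hs : σ.IsCycleOn σ.support := by simpa [coe_support_eq_set_support] using hσ.isCycleOn
  obtain ⟨k, hk, hkb⟩ := hs.exists_pow_eq ha hb
  have hk₀ : 0 < k := Nat.pos_of_ne_zero fun hk₀ => hne (by simpa [hk₀] using hkb)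
  have hsplit : ¬τ.SameCycle a b := hs.not_sameCycle_mul_swap ha hk₀ hk hkb
  have hsupp : τ.support = σ.support :=
    support_mul_swap_of_apply_ne (mem_support.1 ha) (mem_support.1 hb) hab hba
  have hτ : τ = τ.cycleOf a * τ.cycleOf b := eq_cycleOf_mul_cycleOf hsplit fun x hx =>
    hs.sameCycle_mul_swap_or ha hk₀ hk hkb (hsupp ▸ mem_support.2 hx)
  have hdisj := disjoint_cycleOf_of_not_sameCycle hsplit
  refine ⟨τ.cycleOf a, τ.cycleOf b, isCycle_cycleOf τ ?_, isCycle_cycleOf τ ?_, hdisj, hτ, ?_,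
    hdisj.disjoint_support⟩
  · simpa [τ] using hba
  · simpa [τ] using hab
  · rw [← hdisj.support_mul, ← hτ, hsupp]

end Equiv.Perm

/-- For a cycle `σ` and distinct `i₁, i₂` in its support, one of exactly three
mutually exclusive cases holds for `σ(i₁,i₂)`: it splits into two disjoint cycles
partitioning `Sp(σ)`, or it is a cycle on `Sp(σ)` minus one of `i₁, i₂`, or
`σ = (i₁,i₂)` and `σ(i₁,i₂)` is the identity. -/
theorem stmt_11 {α : Type*} [Fintype α] [DecidableEq α] (σ : Equiv.Perm α)
    (hσ : σ.IsCycle) (i₁ i₂ : α) (h₁ : i₁ ∈ σ.support) (h₂ : i₂ ∈ σ.support)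
    (hne : i₁ ≠ i₂) :
    (∃ τ₁ τ₂ : Equiv.Perm α, τ₁.IsCycle ∧ τ₂.IsCycle ∧ τ₁.Disjoint τ₂ ∧
        σ * Equiv.swap i₁ i₂ = τ₁ * τ₂ ∧
        τ₁.support ∪ τ₂.support = σ.support ∧ Disjoint τ₁.support τ₂.support) ∨
    (∃ i, (i = i₁ ∨ i = i₂) ∧ (σ * Equiv.swap i₁ i₂).IsCycle ∧
        (σ * Equiv.swap i₁ i₂).support = σ.support \ {i}) ∨
    (σ = Equiv.swap i₁ i₂ ∧ σ * Equiv.swap i₁ i₂ = 1) := by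
  have hm₁ : σ i₁ ≠ i₁ := Equiv.Perm.mem_support.1 h₁
  have hm₂ : σ i₂ ≠ i₂ := Equiv.Perm.mem_support.1 h₂
  by_cases h₁₂ : σ i₁ = i₂ <;> by_cases h₂₁ : σ i₂ = i₁
  · have hswap : σ = Equiv.swap i₁ i₂ := by
      simpa [h₁₂] using hσ.eq_swap_of_apply_apply_eq_self hm₁ (by rw [h₁₂, h₂₁])
    exact Or.inr (Or.inr ⟨hswap, by rw [hswap, Equiv.swap_mul_self]⟩)
  · exact Or.inr (Or.inl ⟨i₂, Or.inr rfl, hσ.mul_swap_of_apply_eq h₁₂ hm₂ h₂₁⟩)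
  · rw [Equiv.swap_comm]
    exact Or.inr (Or.inl ⟨i₁, Or.inl rfl, hσ.mul_swap_of_apply_eq h₂₁ hm₁ h₁₂⟩)
  · exact Or.inl (hσ.exists_disjoint_cycles_mul_swap_eq h₁ h₂ hne h₁₂ h₂₁)
end

section
/- Every permutation of {0,1,...,n-1} is a composition of at most ⌊3(n-1)/2⌋ transpositions from the set T = {(0,i) : 1 ≤ i ≤ n-1}, and ⌊3(n-1)/2⌋ is the least number t with this property. -/
/-!
A step of a star word is `π ↦ π * (z i)`. Multiplying by a transposition either merges
two cycles or splits one, so a step changes the quantity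
`starNorm z π = #(moved points other than z) + #(nontrivial cycles not through z)`
by at most one, and `starNorm z 1 = 0`: hence every word for `π` has length at least
`starNorm z π`. Conversely, for `π ≠ 1` some step decreases `starNorm z π`: if `π z ≠ z`, use
`i = π z`, which becomes a fixed point; if `π z = z`, use a moved point `i`, whose cycle gets
absorbed into that of `z`. Since every nontrivial cycle has at least two points,
`starNorm z π ≤ 3 (n - 1) / 2`, and a product of disjoint transpositions covering all points
other than `z` (and `z` itself with the one leftover point, if any) attains this bound.
-/

open Equiv Finset

namespace Equiv.Perm

section AgreeOnCycle

variable {α : Type*} {f g : Perm α} {x : α}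

theorem pow_apply_eq_of_forall_sameCycle (h : ∀ y, f.SameCycle x y → g y = f y) (k : ℕ) :
    (g ^ k) x = (f ^ k) x := by
  induction k with
  | zero => rfl
  | succ k ih =>
    rw [pow_succ', mul_apply, ih, h _ (sameCycle_pow_right.2 (SameCycle.refl f x)), ← mul_apply,
      ← pow_succ']

theorem sameCycle_iff_of_forall_sameCycle [Finite α] (h : ∀ y, f.SameCycle x y → g y = f y)
    {y : α} : g.SameCycle x y ↔ f.SameCycle x y := by
  constructor
  · intro hg
    obtain ⟨k, rfl⟩ := hg.exists_nat_pow_eq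
    rw [pow_apply_eq_of_forall_sameCycle h]
    exact sameCycle_pow_right.2 (SameCycle.refl f x)
  · intro hf
    obtain ⟨k, rfl⟩ := hf.exists_nat_pow_eq
    rw [← pow_apply_eq_of_forall_sameCycle h]
    exact sameCycle_pow_right.2 (SameCycle.refl g x)

theorem cycleOf_eq_of_forall_sameCycle [DecidableEq α] [Fintype α]
    (h : ∀ y, f.SameCycle x y → g y = f y) : g.cycleOf x = f.cycleOf x := by
  ext y
  simp only [cycleOf_apply, sameCycle_iff_of_forall_sameCycle h]
  split_ifs with hy
  exacts [h y hy, rfl]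

end AgreeOnCycle

variable {α : Type*} [DecidableEq α]

section MulSwap

variable {π : Perm α} {a b x : α}

theorem mul_swap_apply_of_ne (ha : x ≠ a) (hb : x ≠ b) : (π * swap a b) x = π x := by
  rw [mul_apply, swap_apply_of_ne_of_ne ha hb]

theorem mem_support_mul_swap_iff [Fintype α] (ha : x ≠ a) (hb : x ≠ b) :
    x ∈ (π * swap a b).support ↔ x ∈ π.support := by
  rw [mem_support, mem_support, mul_swap_apply_of_ne ha hb]

theorem apply_eq_mul_swap_apply_of_not_sameCycle (ha : ¬(π * swap a b).SameCycle x a)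
    (hb : ¬(π * swap a b).SameCycle x b) :
    ∀ y, (π * swap a b).SameCycle x y → π y = (π * swap a b) y := by
  rintro y hy
  rw [mul_swap_apply_of_ne (by rintro rfl; exact ha hy) (by rintro rfl; exact hb hy)]

end MulSwap

variable [Fintype α]

def cyclesAvoiding (z : α) (π : Perm α) : Finset (Perm α) :=
  π.cycleFactorsFinset.filter fun c => z ∉ c.support

/-- The Akers–Krishnamurthy distance from `π` to `1` in the star graph centred at `z`. -/
def starNorm (z : α) (π : Perm α) : ℕ :=
  #(π.support.erase z) + #(cyclesAvoiding z π)

variable {z : α} {π : Perm α}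

theorem mem_cyclesAvoiding {c : Perm α} :
    c ∈ cyclesAvoiding z π ↔ ∃ x ∈ π.support, ¬π.SameCycle z x ∧ π.cycleOf x = c := by
  constructor
  · intro hc
    obtain ⟨hc, hz⟩ := mem_filter.1 hc
    obtain ⟨x, hx⟩ := (mem_cycleFactorsFinset_iff.1 hc).1.nonempty_support
    have hxπ := mem_cycleFactorsFinset_support_le hc hx
    refine ⟨x, hxπ, fun hzx => hz ?_, (cycle_is_cycleOf hx hc).symm⟩
    rw [cycle_is_cycleOf hx hc, mem_support_cycleOf_iff]
    exact ⟨hzx.symm, hxπ⟩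
  · rintro ⟨x, hx, hzx, rfl⟩
    exact mem_filter.2 ⟨cycleOf_mem_cycleFactorsFinset_iff.2 hx,
      fun hz => hzx (mem_support_cycleOf_iff.1 hz).1.symm⟩

theorem cycleOf_mem_cyclesAvoiding {x : α} (hx : x ∈ π.support) (hzx : ¬π.SameCycle z x) :
    π.cycleOf x ∈ cyclesAvoiding z π :=
  mem_cyclesAvoiding.2 ⟨x, hx, hzx, rfl⟩

theorem two_mul_card_cyclesAvoiding_le : 2 * #(cyclesAvoiding z π) ≤ #(π.support.erase z) := by
  set A := cyclesAvoiding z π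
  have hsub : A.biUnion support ⊆ π.support.erase z := by
    intro x hx
    obtain ⟨c, hc, hxc⟩ := mem_biUnion.1 hx
    obtain ⟨hc, hz⟩ := mem_filter.1 hc
    exact mem_erase.2 ⟨by rintro rfl; exact hz hxc, mem_cycleFactorsFinset_support_le hc hxc⟩
  have hdisj : (A : Set (Perm α)).PairwiseDisjoint support := fun c hc d hd hcd =>
    disjoint_iff_disjoint_support.1
      (cycleFactorsFinset_pairwise_disjoint π (mem_filter.1 hc).1 (mem_filter.1 hd).1 hcd)
  calc 2 * #A = ∑ _c ∈ A, 2 := by rw [sum_const, smul_eq_mul, mul_comm]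
    _ ≤ ∑ c ∈ A, #c.support := sum_le_sum fun c hc =>
      (mem_cycleFactorsFinset_iff.1 (mem_filter.1 hc).1).1.two_le_card_support
    _ = #(A.biUnion support) := (card_biUnion hdisj).symm
    _ ≤ #(π.support.erase z) := card_le_card hsub

theorem starNorm_le_card : starNorm z π ≤ 3 * (Fintype.card α - 1) / 2 := by
  have hsupp : #(π.support.erase z) ≤ Fintype.card α - 1 := by
    calc #(π.support.erase z) ≤ #(univ.erase z) :=
          card_le_card (erase_subset_erase _ (subset_univ _))
      _ = Fintype.card α - 1 := by rw [card_erase_of_mem (mem_univ _), card_univ]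
  have := two_mul_card_cyclesAvoiding_le (z := z) (π := π)
  unfold starNorm
  omega

theorem starNorm_one : starNorm z (1 : Perm α) = 0 := by
  simp [starNorm, cyclesAvoiding]

theorem support_mul_swap_erase_subset {i : α} (hi : i ∈ π.support) :
    (π * swap z i).support.erase z ⊆ π.support.erase z := by
  intro x hx
  obtain ⟨hxz, hx⟩ := mem_erase.1 hx
  refine mem_erase.2 ⟨hxz, ?_⟩
  rcases eq_or_ne x i with rfl | hxi
  · exact hi
  · exact (mem_support_mul_swap_iff hxz hxi).1 hx

theorem cycleOf_mul_swap_mem_cyclesAvoiding {i x : α} (hx : x ∈ (π * swap z i).support)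
    (hzx : ¬(π * swap z i).SameCycle z x) (hxi : ¬(π * swap z i).SameCycle x i) :
    (π * swap z i).cycleOf x ∈ cyclesAvoiding z π := by
  have h := apply_eq_mul_swap_apply_of_not_sameCycle (fun h => hzx h.symm) hxi
  rw [← cycleOf_eq_of_forall_sameCycle h]
  refine cycleOf_mem_cyclesAvoiding ?_ fun hπ => hzx ?_
  · rwa [mem_support, h x (SameCycle.refl _ _), ← mem_support]
  · exact ((sameCycle_iff_of_forall_sameCycle h).1 hπ.symm).symm

theorem starNorm_mul_swap_le (π : Perm α) (z i : α) :
    starNorm z (π * swap z i) ≤ starNorm z π + 1 := by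
  set σ := π * swap z i
  -- If `π` fixes `i`, the step splices `i` into the cycle of `z`; otherwise the only cycle it
  -- can create is the one through `i`.
  by_cases hi : π i = i
  · have hzi : σ.SameCycle z i := ⟨1, by simp [σ, hi]⟩
    have hsupp : σ.support.erase z ⊆ insert i (π.support.erase z) := by
      intro x hx
      obtain ⟨hxz, hx⟩ := mem_erase.1 hx
      rcases eq_or_ne x i with rfl | hxi
      · exact mem_insert_self _ _
      · exact mem_insert_of_mem (mem_erase.2 ⟨hxz, (mem_support_mul_swap_iff hxz hxi).1 hx⟩)
    have hcyc : cyclesAvoiding z σ ⊆ cyclesAvoiding z π := by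
      intro c hc
      obtain ⟨x, hx, hzx, rfl⟩ := mem_cyclesAvoiding.1 hc
      exact cycleOf_mul_swap_mem_cyclesAvoiding hx hzx fun hxi => hzx (hzi.trans hxi.symm)
    have := card_le_card hsupp
    have := card_insert_le i (π.support.erase z)
    have := card_le_card hcyc
    unfold starNorm
    omega
  · have hcyc : cyclesAvoiding z σ ⊆ insert (σ.cycleOf i) (cyclesAvoiding z π) := by
      intro c hc
      obtain ⟨x, hx, hzx, rfl⟩ := mem_cyclesAvoiding.1 hc
      by_cases hxi : σ.SameCycle x i
      · exact mem_insert.2 (Or.inl hxi.cycleOf_eq)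
      · exact mem_insert_of_mem (cycleOf_mul_swap_mem_cyclesAvoiding hx hzx hxi)
    have hsupp : σ.support.erase z ⊆ π.support.erase z :=
      support_mul_swap_erase_subset (mem_support.2 hi)
    have := card_le_card hsupp
    have := card_le_card hcyc
    have := card_insert_le (σ.cycleOf i) (cyclesAvoiding z π)
    unfold starNorm
    omega

theorem starNorm_mul_swap_apply_lt (hz : π z ≠ z) :
    starNorm z (π * swap z (π z)) < starNorm z π := by
  set i := π z
  set σ := π * swap z i
  have hσi : σ i = i := by simp [σ, i]
  have hi : i ∈ π.support.erase z := mem_erase.2 ⟨hz, mem_support.2 fun h => hz (π.injective h)⟩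
  have hsupp : σ.support.erase z ⊆ (π.support.erase z).erase i := by
    intro x hx
    obtain ⟨hxz, hx⟩ := mem_erase.1 hx
    have hxi : x ≠ i := by rintro rfl; exact mem_support.1 hx hσi
    exact mem_erase.2 ⟨hxi, mem_erase.2 ⟨hxz, (mem_support_mul_swap_iff hxz hxi).1 hx⟩⟩
  have hcyc : cyclesAvoiding z σ ⊆ cyclesAvoiding z π := by
    intro c hc
    obtain ⟨x, hx, hzx, rfl⟩ := mem_cyclesAvoiding.1 hc
    refine cycleOf_mul_swap_mem_cyclesAvoiding hx hzx fun hxi => mem_support.1 hx ?_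
    rw [hxi.eq_of_right hσi, hσi]
  have := card_le_card hsupp
  have := card_erase_of_mem hi
  have := card_pos.2 ⟨i, hi⟩
  have := card_le_card hcyc
  unfold starNorm
  omega

theorem starNorm_mul_swap_lt_of_apply_eq_self {i : α} (hz : π z = z) (hi : i ∈ π.support) :
    starNorm z (π * swap z i) < starNorm z π := by
  set σ := π * swap z i
  have hiz : i ≠ z := by rintro rfl; exact mem_support.1 hi hz
  have hσi : σ.SameCycle i z := ⟨1, by simp [σ, hz]⟩
  have hci : π.cycleOf i ∈ cyclesAvoiding z π :=
    cycleOf_mem_cyclesAvoiding hi fun h => hiz (h.eq_of_left hz).symm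
  have hcyc : cyclesAvoiding z σ ⊆ (cyclesAvoiding z π).erase (π.cycleOf i) := by
    intro c hc
    obtain ⟨x, hx, hzx, rfl⟩ := mem_cyclesAvoiding.1 hc
    have hxi : ¬σ.SameCycle x i := fun h => hzx (h.trans hσi).symm
    refine mem_erase.2 ⟨fun h => hxi ?_, cycleOf_mul_swap_mem_cyclesAvoiding hx hzx hxi⟩
    have : i ∈ (σ.cycleOf x).support := by
      rw [h, mem_support_cycleOf_iff]
      exact ⟨SameCycle.refl _ _, hi⟩
    exact (mem_support_cycleOf_iff.1 this).1
  have hsupp : σ.support.erase z ⊆ π.support.erase z := support_mul_swap_erase_subset hi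
  have := card_le_card hsupp
  have := card_le_card hcyc
  have := card_erase_of_mem hci
  have := card_pos.2 ⟨_, hci⟩
  unfold starNorm
  omega

theorem exists_starNorm_mul_swap_lt (hπ : π ≠ 1) :
    ∃ i, i ≠ z ∧ starNorm z (π * swap z i) < starNorm z π := by
  by_cases hz : π z = z
  · obtain ⟨i, hi⟩ := nonempty_iff_ne_empty.2 (mt support_eq_empty_iff.1 hπ)
    have hiz : i ≠ z := by rintro rfl; exact mem_support.1 hi hz
    exact ⟨i, hiz, starNorm_mul_swap_lt_of_apply_eq_self hz hi⟩
  · exact ⟨π z, hz, starNorm_mul_swap_apply_lt hz⟩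

theorem exists_list_swap_prod_eq (z : α) (π : Perm α) :
    ∃ L : List (Perm α), (∀ τ ∈ L, ∃ i, i ≠ z ∧ τ = swap z i) ∧
      L.prod = π ∧ L.length ≤ starNorm z π := by
  induction hN : starNorm z π using Nat.strong_induction_on generalizing π with
  | _ N ih =>
  rcases eq_or_ne π 1 with rfl | hπ
  · exact ⟨[], by simp, rfl, by simp⟩
  obtain ⟨i, hiz, hlt⟩ := exists_starNorm_mul_swap_lt (z := z) hπ
  obtain ⟨L, hL, hprod, hlen⟩ := ih _ (hN ▸ hlt) (π * swap z i) rfl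
  refine ⟨L ++ [swap z i], ?_, by simp [hprod, mul_assoc], by simp; omega⟩
  simp only [List.mem_append, List.mem_singleton]
  rintro τ (hτ | rfl)
  exacts [hL τ hτ, ⟨i, hiz, rfl⟩]

theorem starNorm_prod_le (L : List (Perm α)) (hL : ∀ τ ∈ L, ∃ i, τ = swap z i) :
    starNorm z L.prod ≤ L.length := by
  induction L using List.reverseRecOn with
  | nil => simp [starNorm_one]
  | append_singleton L τ ih =>
    obtain ⟨i, rfl⟩ := hL τ (by simp)
    have := ih fun τ hτ => hL τ (by simp [hτ])
    rw [List.prod_append, List.prod_singleton, List.length_append, List.length_singleton]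
    exact (starNorm_mul_swap_le _ z i).trans (by omega)

theorem starNorm_mul_of_disjoint {f g : Perm α} (h : f.Disjoint g) :
    starNorm z (f * g) = starNorm z f + starNorm z g := by
  have hs := disjoint_iff_disjoint_support.1 h
  unfold starNorm cyclesAvoiding
  rw [h.support_mul, h.cycleFactorsFinset_mul_eq_union, erase_union_distrib, filter_union,
    card_union_of_disjoint (disjoint_of_subset_left (erase_subset _ _)
      (disjoint_of_subset_right (erase_subset _ _) hs)),
    card_union_of_disjoint (disjoint_filter_filter h.disjoint_cycleFactorsFinset)]
  omega

theorem starNorm_swap {a b : α} (hab : a ≠ b) (ha : z ≠ a) (hb : z ≠ b) :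
    starNorm z (swap a b) = 3 := by
  have hz : z ∉ (swap a b).support := by simp [support_swap hab, ha, hb]
  rw [starNorm, cyclesAvoiding, (isCycle_swap hab).cycleFactorsFinset_eq_singleton,
    filter_singleton, if_pos hz, erase_eq_of_notMem hz, card_support_swap hab, card_singleton]

theorem starNorm_swap_left {c : α} (hc : z ≠ c) : starNorm z (swap z c) = 1 := by
  rw [starNorm, cyclesAvoiding, (isCycle_swap hc).cycleFactorsFinset_eq_singleton,
    filter_singleton, if_neg (by simp [support_swap hc]), support_swap hc, erase_insert_eq_erase,
    erase_eq_of_notMem (notMem_singleton.2 hc), card_singleton, card_empty]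

theorem exists_three_mul_card_le_starNorm (s : Finset α) (hzs : z ∉ s) :
    ∃ π : Perm α, π.support ⊆ insert z s ∧ 3 * #s ≤ 2 * starNorm z π + 1 := by
  induction s using Finset.strongInduction with
  | H s ih =>
  rcases s.eq_empty_or_nonempty with rfl | ⟨a, ha⟩
  · exact ⟨1, by simp, by simp⟩
  have haz : z ≠ a := by rintro rfl; exact hzs ha
  rcases (s.erase a).eq_empty_or_nonempty with hs | ⟨b, hb⟩
  · have := card_erase_of_mem ha
    refine ⟨swap z a, ?_, ?_⟩
    · rw [support_swap haz]
      exact insert_subset_insert _ (singleton_subset_iff.2 ha)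
    · rw [starNorm_swap_left haz]
      simp only [hs, card_empty] at this
      omega
  obtain ⟨hba, hb'⟩ := mem_erase.1 hb
  have hbz : z ≠ b := by rintro rfl; exact hzs hb'
  have := card_erase_add_one hb
  have := card_erase_add_one ha
  have hts : (s.erase a).erase b ⊂ s := (erase_ssubset hb).trans (erase_ssubset ha)
  obtain ⟨π, hπ, hπs⟩ := ih _ hts fun h => hzs (hts.subset h)
  have hdisj : (swap a b).Disjoint π := by
    rw [disjoint_iff_disjoint_support, support_swap hba.symm]
    refine disjoint_of_subset_right hπ ?_
    simp [haz, hbz, hba]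
  refine ⟨swap a b * π, ?_, ?_⟩
  · rw [hdisj.support_mul, support_swap hba.symm]
    refine union_subset ?_ (hπ.trans (insert_subset_insert _ hts.subset))
    simp [insert_subset_iff, ha, hb']
  · rw [starNorm_mul_of_disjoint hdisj, starNorm_swap hba.symm haz hbz]
    omega

theorem exists_card_le_starNorm (z : α) :
    ∃ π : Perm α, 3 * (Fintype.card α - 1) / 2 ≤ starNorm z π := by
  obtain ⟨π, -, hπ⟩ := exists_three_mul_card_le_starNorm (univ.erase z) (notMem_erase z _)
  rw [card_erase_of_mem (mem_univ z), card_univ] at hπ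
  exact ⟨π, by omega⟩

end Equiv.Perm

/-- Every permutation of `{0,...,n-1}` is a composition of at most `⌊3(n-1)/2⌋`
transpositions from `T = {(0,i) : 1 ≤ i ≤ n-1}`, and `⌊3(n-1)/2⌋` is the least `t`
with this property. -/
theorem stmt_14 (n : ℕ) (hn : 0 < n) :
    (∀ π : Equiv.Perm (Fin n), ∃ L : List (Equiv.Perm (Fin n)),
      (∀ τ ∈ L, ∃ i : Fin n, i ≠ ⟨0, hn⟩ ∧ τ = Equiv.swap ⟨0, hn⟩ i) ∧
      L.prod = π ∧ L.length ≤ 3 * (n - 1) / 2) ∧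
    (∀ t : ℕ,
      (∀ π : Equiv.Perm (Fin n), ∃ L : List (Equiv.Perm (Fin n)),
        (∀ τ ∈ L, ∃ i : Fin n, i ≠ ⟨0, hn⟩ ∧ τ = Equiv.swap ⟨0, hn⟩ i) ∧
        L.prod = π ∧ L.length ≤ t) → 3 * (n - 1) / 2 ≤ t) := by
  refine ⟨fun π => ?_, fun t ht => ?_⟩
  · obtain ⟨L, hL, hprod, hlen⟩ := Perm.exists_list_swap_prod_eq ⟨0, hn⟩ π
    refine ⟨L, hL, hprod, hlen.trans ?_⟩
    simpa using Perm.starNorm_le_card (z := (⟨0, hn⟩ : Fin n)) (π := π)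
  · obtain ⟨π, hπ⟩ := Perm.exists_card_le_starNorm (⟨0, hn⟩ : Fin n)
    obtain ⟨L, hL, rfl, hlen⟩ := ht π
    have hnorm := Perm.starNorm_prod_le L fun τ hτ => (hL τ hτ).imp fun _ => And.right
    rw [Fintype.card_fin] at hπ
    omega
end

section
/- If a simple connected graph is neither a path nor a cycle, then it has a spanning tree that is not a path (equivalently, a spanning tree containing a vertex of degree at least three). -/
/-!
If every vertex had degree at most 2, the vertex whose degree is not 2 would be a vertex of
degree at most 1, and a connected graph of maximum degree 2 with such a vertex is a path:
delete that vertex and induct. So some vertex `v` has three neighbours. The edges at `v` form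
a star, which is acyclic and hence extends to a spanning tree; in that tree `v` keeps its three
neighbours, which no vertex of a path graph has.
-/

namespace SimpleGraph

variable {V : Type*} {G : SimpleGraph V}

lemma pathGraph_adj_succ_succ {n : ℕ} {i j : Fin n} :
    (pathGraph (n + 1)).Adj i.succ j.succ ↔ (pathGraph n).Adj i j := by
  simp [pathGraph_adj]

lemma pathGraph_adj_zero_succ {n : ℕ} {i : Fin n} :
    (pathGraph (n + 1)).Adj 0 i.succ ↔ (i : ℕ) = 0 := by
  simp [pathGraph_adj, eq_comm]

lemma eq_or_eq_or_eq_of_pathGraph_adj {n : ℕ} {i a b c : Fin n} (ha : (pathGraph n).Adj i a)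
    (hb : (pathGraph n).Adj i b) (hc : (pathGraph n).Adj i c) : a = b ∨ a = c ∨ b = c := by
  simp only [pathGraph_adj] at ha hb hc
  omega

lemma not_exists_iso_pathGraph_of_adj {v a b c : V} (hab : a ≠ b) (hac : a ≠ c) (hbc : b ≠ c)
    (ha : G.Adj v a) (hb : G.Adj v b) (hc : G.Adj v c) :
    ¬ ∃ m, Nonempty (G ≃g pathGraph m) := by
  rintro ⟨m, ⟨e⟩⟩
  rcases eq_or_eq_or_eq_of_pathGraph_adj (e.map_adj_iff.mpr ha) (e.map_adj_iff.mpr hb)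
    (e.map_adj_iff.mpr hc) with h | h | h
  exacts [hab (e.injective h), hac (e.injective h), hbc (e.injective h)]

lemma Connected.exists_isTree_le_forall_adj_iff (hG : G.Connected) (v : V) :
    ∃ T ≤ G, T.IsTree ∧ ∀ w, T.Adj v w ↔ G.Adj v w := by
  obtain ⟨T, hST, hTG, hT⟩ := hG.exists_isTree_le_of_le_of_isAcyclic inf_le_left
    ((isAcyclic_starGraph v).anti (inf_le_right : G ⊓ starGraph v ≤ _))
  exact ⟨T, hTG, hT, fun w => ⟨(hTG ·), fun h => hST ⟨h, by simp [h.ne]⟩⟩⟩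

lemma ncard_neighborSet_eq_degree (v : V) [Fintype (G.neighborSet v)] :
    (G.neighborSet v).ncard = G.degree v := by
  rw [← Nat.card_coe_set_eq, Nat.card_eq_fintype_card, card_neighborSet_eq_degree]

lemma ncard_neighborSet_induce (s : Set V) (x : s) :
    ((G.induce s).neighborSet x).ncard = (G.neighborSet x ∩ s).ncard := by
  rw [← Set.ncard_preimage_of_injective_subset_range Subtype.val_injective
    (Set.inter_subset_right.trans Subtype.range_coe.superset)]
  congr 1
  ext
  simp

lemma exists_iso_pathGraph_succ_of_neighborSet_eq {v w : V} (hvw : G.neighborSet v = {w})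
    (hw : w ≠ v) {n : ℕ} (f : G.induce {v}ᶜ ≃g pathGraph n)
    (hf : (f ⟨w, hw⟩ : ℕ) = 0) :
    ∃ e : G ≃g pathGraph (n + 1), (e v : ℕ) = 0 := by
  classical
  let e : V ≃ Fin (n + 1) := (Equiv.optionSubtypeNe v).symm.trans
    (((Equiv.subtypeEquivRight fun _ => Set.mem_compl_singleton_iff.symm).trans
      f.toEquiv).optionCongr.trans (finSuccEquiv n).symm)
  have he_self : e v = 0 := by simp [e]
  have he_ne (x : V) (hx : x ≠ v) : e x = (f ⟨x, hx⟩).succ := by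
    simp [e, Equiv.optionSubtypeNe_symm_of_ne hx]
    rfl
  have hadj_self (y : V) (hy : y ≠ v) : (pathGraph (n + 1)).Adj (e v) (e y) ↔ G.Adj v y := by
    rw [he_self, he_ne y hy, pathGraph_adj_zero_succ, ← mem_neighborSet, hvw,
      Set.mem_singleton_iff, ← hf, Fin.val_inj, f.apply_eq_iff_eq]
    exact Subtype.ext_iff
  refine ⟨⟨e, fun {x y} => ?_⟩, by simp [he_self]⟩
  by_cases hx : x = v <;> by_cases hy : y = v
  · simp [hx, hy]
  · rw [hx]
    exact hadj_self y hy
  · rw [hy, adj_comm, G.adj_comm]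
    exact hadj_self x hx
  · rw [he_ne x hx, he_ne y hy, pathGraph_adj_succ_succ, f.map_adj_iff]
    rfl

/-- Sending the leaf `v` to the end `0` of the path is what lets the induction reattach it. -/
lemma Connected.exists_iso_pathGraph [Finite V] (hG : G.Connected)
    (hdeg : ∀ u, (G.neighborSet u).ncard ≤ 2) {v : V} (hv : (G.neighborSet v).Subsingleton) :
    ∃ e : G ≃g pathGraph (Nat.card V), (e v : ℕ) = 0 := by
  induction hn : Nat.card V generalizing V with
  | zero =>
    have := hG.nonempty
    exact absurd hn Finite.card_pos.ne'
  | succ n ih =>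
    rcases (G.neighborSet v).eq_empty_or_nonempty with hempty | ⟨w, hw⟩
    · have hall (x : V) : x = v := by
        by_contra hx
        exact not_reachable_of_neighborSet_right_eq_empty hx hempty (hG.preconnected x v)
      have : Subsingleton V := ⟨fun x y => (hall x).trans (hall y).symm⟩
      obtain rfl : n = 0 := by
        have := Finite.card_le_one_iff_subsingleton.mpr this
        omega
      refine ⟨⟨Finite.equivFinOfCardEq hn, fun {x y} => ?_⟩, by simp⟩
      rw [hall x, hall y]
      simp
    · have hvw : G.neighborSet v = {w} := hv.eq_singleton_of_mem hw
      have hwv : w ∈ ({v}ᶜ : Set V) := (G.ne_of_adj hw).symm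
      have : Nonempty ({v}ᶜ : Set V) := ⟨⟨w, hwv⟩⟩
      have hH : (G.induce {v}ᶜ).Connected :=
        ⟨hG.preconnected.induce_of_degree_eq_one fun x hx => by
          obtain rfl : x = v := by simpa using hx
          exact hv⟩
      have hdegH (u : ({v}ᶜ : Set V)) : ((G.induce {v}ᶜ).neighborSet u).ncard ≤ 2 :=
        (ncard_neighborSet_induce _ u).trans_le
          ((Set.ncard_le_ncard Set.inter_subset_left).trans (hdeg u))
      have hleaf : ((G.induce {v}ᶜ).neighborSet ⟨w, hwv⟩).Subsingleton := by
        rw [← Set.ncard_le_one_iff_subsingleton, ncard_neighborSet_induce, ← Set.sdiff_eq]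
        dsimp only
        rw [Set.ncard_sdiff_singleton_of_mem (show v ∈ G.neighborSet w from hw.symm)]
        have := hdeg w
        omega
      have hcard : Nat.card ({v}ᶜ : Set V) = n := by
        rw [Nat.card_coe_set_eq, Set.ncard_compl, Set.ncard_singleton, hn]
        rfl
      obtain ⟨f, hf⟩ := ih hH hdegH hleaf hcard
      exact exists_iso_pathGraph_succ_of_neighborSet_eq hvw hwv f hf

end SimpleGraph

open SimpleGraph

theorem stmt_17_general {V : Type*} [Fintype V] (G : SimpleGraph V)
    [DecidableRel G.Adj] (hG : G.Connected)
    (hpath : ¬ ∃ m : ℕ, Nonempty (G ≃g SimpleGraph.pathGraph m))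
    (hcycle : ¬ ∀ v : V, G.degree v = 2) :
    ∃ T : SimpleGraph V, T ≤ G ∧ T.IsTree ∧
      (¬ ∃ m : ℕ, Nonempty (T ≃g SimpleGraph.pathGraph m)) ∧
      (∃ v u₁ u₂ u₃ : V, u₁ ≠ u₂ ∧ u₁ ≠ u₃ ∧ u₂ ≠ u₃ ∧
        T.Adj v u₁ ∧ T.Adj v u₂ ∧ T.Adj v u₃) := by
  obtain ⟨v, hv⟩ : ∃ v, 2 < G.degree v := by
    by_contra! hle
    obtain ⟨v₀, hv₀⟩ := not_forall.mp hcycle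
    have hleaf : (G.neighborSet v₀).Subsingleton := by
      rw [← Set.ncard_le_one_iff_subsingleton, ncard_neighborSet_eq_degree]
      have := hle v₀
      omega
    obtain ⟨e, -⟩ :=
      hG.exists_iso_pathGraph (fun u => (ncard_neighborSet_eq_degree u).trans_le (hle u)) hleaf
    exact hpath ⟨_, ⟨e⟩⟩
  obtain ⟨a, b, c, ha, hb, hc, hab, hac, hbc⟩ := Finset.two_lt_card_iff.mp hv
  obtain ⟨T, hTG, hT, hTv⟩ := hG.exists_isTree_le_forall_adj_iff v
  rw [mem_neighborFinset, ← hTv] at ha hb hc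
  exact ⟨T, hTG, hT, not_exists_iso_pathGraph_of_adj hab hac hbc ha hb hc,
    v, a, b, c, hab, hac, hbc, ha, hb, hc⟩

/-- A connected simple graph that is neither a path nor a cycle (a cycle being a
connected graph all of whose vertices have degree 2) has a spanning tree that is
not a path, and hence has a vertex of degree at least three in that tree. -/
theorem stmt_17 {V : Type*} [Fintype V] [DecidableEq V] (G : SimpleGraph V)
    [DecidableRel G.Adj] (hG : G.Connected)
    (hpath : ¬ ∃ m : ℕ, Nonempty (G ≃g SimpleGraph.pathGraph m))
    (hcycle : ¬ ∀ v : V, G.degree v = 2) :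
    ∃ T : SimpleGraph V, T ≤ G ∧ T.IsTree ∧
      (¬ ∃ m : ℕ, Nonempty (T ≃g SimpleGraph.pathGraph m)) ∧
      (∃ v u₁ u₂ u₃ : V, u₁ ≠ u₂ ∧ u₁ ≠ u₃ ∧ u₂ ≠ u₃ ∧
        T.Adj v u₁ ∧ T.Adj v u₂ ∧ T.Adj v u₃) :=
  stmt_17_general G hG hpath hcycle
end
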